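/- Over F = ℝ with metaplectic cocycle β, for all λ₁, λ₂ ∈ ℝ^× one has β(z(λ₁), z(λ₂)) = [λ₁, λ₂], the quadratic Hilbert symbol; in particular β(z(-1), z(-1)) = -1, so the extension does not split over the center Z. -/

import Mathlib

/-!
On upper triangular matrices `ℓ` is the lower right entry `d`, so the two arguments of the
Hilbert symbol in `β(g, g')` are `d'` and `d · det g = a d²`; the square drops out, leaving
`[d', a]`. For central matrices `a = d`, which gives `[λ₂, λ₁] = [λ₁, λ₂]`.
-/

open Matrix

noncomputable def hilbR (a b : ℝ) : ℝ := if a < 0 ∧ b < 0 then -1 else 1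

noncomputable def ellR (g : Matrix (Fin 2) (Fin 2) ℝ) : ℝ :=
  if g 1 0 ≠ 0 then g 1 0 else g 1 1

noncomputable def sR (_ : Matrix (Fin 2) (Fin 2) ℝ) : ℝ := 1

noncomputable def betaR (g₁ g₂ : Matrix (Fin 2) (Fin 2) ℝ) : ℝ :=
  hilbR (ellR (g₁ * g₂) / ellR g₁) (ellR (g₁ * g₂) / ellR g₂ * g₁.det) *
    sR g₁ * sR g₂ * sR (g₁ * g₂)

lemma hilbR_comm (a b : ℝ) : hilbR a b = hilbR b a := by
  simp only [hilbR, and_comm]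

lemma hilbR_mul_pos_right (a : ℝ) {b c : ℝ} (hc : 0 < c) : hilbR a (b * c) = hilbR a b := by
  have hneg : b * c < 0 ↔ b < 0 := by
    simp only [← not_le, mul_nonneg_iff_of_pos_right hc]
  simp only [hilbR, hneg]

lemma hilbR_neg_one_neg_one : hilbR (-1) (-1) = -1 := by
  norm_num [hilbR]

lemma ellR_upperTriangular (a b d : ℝ) : ellR !![a, b; 0, d] = d := by
  simp [ellR]

lemma betaR_upperTriangular (a b d a' b' d' : ℝ) (hd : d ≠ 0) (hd' : d' ≠ 0) :
    betaR !![a, b; 0, d] !![a', b'; 0, d'] = hilbR d' a := by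
  have hprod : !![a, b; 0, d] * !![a', b'; 0, d'] = !![a * a', a * b' + b * d'; 0, d * d'] := by
    simp
  have hdet : d * (a * d - b * 0) = a * d ^ 2 := by ring
  rw [betaR, hprod, ellR_upperTriangular, ellR_upperTriangular, ellR_upperTriangular,
    det_fin_two_of, mul_div_cancel_left₀ _ hd, mul_div_cancel_right₀ _ hd', hdet,
    hilbR_mul_pos_right _ (by positivity)]
  simp only [sR, mul_one]

lemma betaR_scalar {μ ν : ℝ} (hμ : μ ≠ 0) (hν : ν ≠ 0) :
    betaR !![μ, 0; 0, μ] !![ν, 0; 0, ν] = hilbR μ ν :=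
  (betaR_upperTriangular μ 0 μ ν 0 ν hμ hν).trans (hilbR_comm ν μ)

/-- on the centre `Z`, the metaplectic cocycle over `ℝ` is the Hilbert
symbol: `β(z(λ₁), z(λ₂)) = [λ₁, λ₂]` for `λ₁, λ₂ ∈ ℝˣ`, where `z(λ) = diag(λ,λ)`;
in particular `β(z(-1), z(-1)) = -1`, so the extension does not split over `Z`. -/
theorem betaR_centre_hilbert (lam₁ lam₂ : ℝ) (h₁ : lam₁ ≠ 0) (h₂ : lam₂ ≠ 0) :
    betaR !![lam₁, 0; 0, lam₁] !![lam₂, 0; 0, lam₂] = hilbR lam₁ lam₂ ∧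
    betaR !![(-1 : ℝ), 0; 0, -1] !![(-1 : ℝ), 0; 0, -1] = -1 :=
  ⟨betaR_scalar h₁ h₂,
    (betaR_scalar (by norm_num) (by norm_num)).trans hilbR_neg_one_neg_one⟩
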